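/- For the QBF-to-hybrid reduction f mapping a quantified Boolean formula ψ (in which negations occur only in front of variables) to the monotone hybrid formula f(ψ) = ↓r.◇↓s.◇h(ψ), where h(∃x_k.χ) = @_r ◇ ↓x_k. h(χ), h(∀x_k.χ) = @_r □ ↓x_k. h(χ), h(χ₁∧χ₂) = h(χ₁)∧h(χ₂), h(χ₁∨χ₂) = h(χ₁)∨h(χ₂), h(x_k) = @_s x_k, and h(¬x_k) = @_s ◇ x_k: a closed quantified Boolean formula ψ is true if and only if f(ψ) is satisfiable over the frame (ℕ,<). -/

import Mathlib

/-- Quantified Boolean formulas in which negation occurs only in front of variables. -/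
inductive QBF : Type
  | pos : ℕ → QBF
  | neg : ℕ → QBF
  | conj : QBF → QBF → QBF
  | disj : QBF → QBF → QBF
  | ex : ℕ → QBF → QBF
  | all : ℕ → QBF → QBF

/-- Standard QBF semantics under a Boolean assignment β. -/
def qeval (β : ℕ → Bool) : QBF → Prop
  | .pos x => β x = true
  | .neg x => β x = false
  | .conj a b => qeval β a ∧ qeval β b
  | .disj a b => qeval β a ∨ qeval β b
  | .ex x a => ∃ c : Bool, qeval (Function.update β x c) a
  | .all x a => ∀ c : Bool, qeval (Function.update β x c) a

/-- Free variables of a QBF. -/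
def qfree : QBF → Finset ℕ
  | .pos x => {x}
  | .neg x => {x}
  | .conj a b => qfree a ∪ qfree b
  | .disj a b => qfree a ∪ qfree b
  | .ex x a => (qfree a).erase x
  | .all x a => (qfree a).erase x

/-- Monotone hybrid formulas MHL(◇,□,↓,@) over state variables. -/
inductive HForm : Type
  | svar : ℕ → HForm
  | conj : HForm → HForm → HForm
  | disj : HForm → HForm → HForm
  | dia : HForm → HForm
  | box : HForm → HForm
  | bind : ℕ → HForm → HForm
  | at_ : ℕ → HForm → HForm

/-- Hybrid satisfaction over (ℕ,<). -/
def sat (g : ℕ → ℕ) (n : ℕ) : HForm → Prop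
  | .svar x => g x = n
  | .conj a b => sat g n a ∧ sat g n b
  | .disj a b => sat g n a ∨ sat g n b
  | .dia a => ∃ m > n, sat g m a
  | .box a => ∀ m > n, sat g m a
  | .bind x a => sat (Function.update g x n) n a
  | .at_ x a => sat g (g x) a

/-- State-variable encoding: r ↦ 0, s ↦ 1, QBF variable x_k ↦ k + 2.
The inner translation h. -/
def h : QBF → HForm
  | .pos x => .at_ 1 (.svar (x + 2))
  | .neg x => .at_ 1 (.dia (.svar (x + 2)))
  | .conj a b => .conj (h a) (h b)
  | .disj a b => .disj (h a) (h b)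
  | .ex x a => .at_ 0 (.dia (.bind (x + 2) (h a)))
  | .all x a => .at_ 0 (.box (.bind (x + 2) (h a)))

/-- The reduction f(ψ) = ↓r.◇↓s.◇h(ψ). -/
def f (ψ : QBF) : HForm := .bind 0 (.dia (.bind 1 (.dia (h ψ))))

/-!
Read a hybrid assignment `g` as the Boolean assignment under which `x_k` is true iff `x_k` names
the state of `s`. Since `h` begins every clause with `@_r` or `@_s`, the evaluation point never
matters, and quantifying over the states after `r` amounts to quantifying over the truth values
of `x_k`: the state `s` reads as true, every later state as false. Truth of `ψ` thus gives a model
of `f ψ` with `r, s` at `0, 1`. Conversely, in a model of `f ψ` there may be states strictly between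
`r` and `s`; they read as false but do not satisfy `@_s ◇ x_k`, so a universal quantifier only
becomes harder to satisfy and the decoded assignment still makes `ψ` true.
-/

open Function

lemma qeval_congr {β β' : ℕ → Bool} (ψ : QBF) (hβ : ∀ x ∈ qfree ψ, β x = β' x) :
    qeval β ψ ↔ qeval β' ψ := by
  induction ψ generalizing β β' with
  | pos x | neg x => simp [qeval, hβ x (by simp [qfree])]
  | conj a b iha ihb =>
    exact and_congr (iha fun x hx => hβ x (by simp [qfree, hx]))
      (ihb fun x hx => hβ x (by simp [qfree, hx]))
  | disj a b iha ihb =>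
    exact or_congr (iha fun x hx => hβ x (by simp [qfree, hx]))
      (ihb fun x hx => hβ x (by simp [qfree, hx]))
  | ex x a ih | all x a ih =>
    have key (c : Bool) : qeval (update β x c) a ↔ qeval (update β' x c) a := by
      refine ih fun y hy => ?_
      rcases eq_or_ne y x with rfl | hyx
      · simp
      · simpa [hyx] using hβ y (by simp [qfree, hyx, hy])
    simp only [qeval, key]

def decodeAssignment (g : ℕ → ℕ) (k : ℕ) : Bool := decide (g (k + 2) = g 1)

lemma decodeAssignment_update (g : ℕ → ℕ) (k q : ℕ) :
    decodeAssignment (update g (k + 2) q) = update (decodeAssignment g) k (decide (q = g 1)) := by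
  funext y
  rcases eq_or_ne y k with rfl | hyk
  · simp [decodeAssignment]
  · simp [decodeAssignment, hyk]

lemma exists_gt_decide_eq {a b : ℕ} (hab : a < b) (c : Bool) : ∃ q > a, decide (q = b) = c := by
  cases c
  · exact ⟨b + 1, by omega, by simp⟩
  · exact ⟨b, hab, by simp⟩

lemma lt_update_add_two {g : ℕ → ℕ} {a q : ℕ} (hvar : ∀ k, a < g (k + 2)) (hq : a < q) (x : ℕ) :
    ∀ k, a < update g (x + 2) q (k + 2) := by
  intro k
  rcases eq_or_ne k x with rfl | hk <;> simp [*]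

lemma sat_f_iff (g : ℕ → ℕ) (n : ℕ) (ψ : QBF) :
    sat g n (f ψ) ↔ ∃ m > n, ∃ p > m, sat (update (update g 0 n) 1 m) p (h ψ) :=
  Iff.rfl

lemma qeval_decodeAssignment_of_sat_h {χ : QBF} {g : ℕ → ℕ} {p : ℕ} (hrs : g 0 < g 1)
    (hχ : sat g p (h χ)) : qeval (decodeAssignment g) χ := by
  induction χ generalizing g p with
  | pos x => simpa [h, sat, qeval, decodeAssignment] using hχ
  | neg x =>
    obtain ⟨m, hm, rfl⟩ := hχ
    simpa [qeval, decodeAssignment] using hm.ne'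
  | conj a b iha ihb => exact ⟨iha hrs hχ.1, ihb hrs hχ.2⟩
  | disj a b iha ihb => exact hχ.imp (iha hrs) (ihb hrs)
  | ex x a ih =>
    obtain ⟨q, -, hq⟩ := hχ
    exact ⟨_, decodeAssignment_update g x q ▸ ih (by simpa using hrs) hq⟩
  | all x a ih =>
    intro c
    obtain ⟨q, hq0, rfl⟩ := exists_gt_decide_eq hrs c
    exact decodeAssignment_update g x q ▸ ih (by simpa using hrs) (hχ q hq0)

lemma sat_h_of_qeval_decodeAssignment {χ : QBF} {g : ℕ → ℕ} (p : ℕ) (hrs : g 1 = g 0 + 1)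
    (hvar : ∀ k, g 0 < g (k + 2)) (hχ : qeval (decodeAssignment g) χ) : sat g p (h χ) := by
  induction χ generalizing g p with
  | pos x => simpa [h, sat, qeval, decodeAssignment] using hχ
  | neg x =>
    have hx : g (x + 2) ≠ g 1 := by simpa [qeval, decodeAssignment] using hχ
    exact ⟨g (x + 2), by have := hvar x; omega, rfl⟩
  | conj a b iha ihb => exact ⟨iha p hrs hvar hχ.1, ihb p hrs hvar hχ.2⟩
  | disj a b iha ihb => exact hχ.imp (iha p hrs hvar) (ihb p hrs hvar)
  | ex x a ih =>
    obtain ⟨c, hc⟩ := hχ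
    obtain ⟨q, hq, rfl⟩ := exists_gt_decide_eq (by omega : g 0 < g 1) c
    refine ⟨q, hq, ih q (by simpa using hrs) (lt_update_add_two hvar hq x) ?_⟩
    exact decodeAssignment_update g x q ▸ hc
  | all x a ih =>
    intro q hq
    refine ih q (by simpa using hrs) (lt_update_add_two hvar hq x) ?_
    exact decodeAssignment_update g x q ▸ hχ _

/-- A closed QBF ψ is true iff f(ψ) is satisfiable over the frame (ℕ,<). -/
theorem stmt11 (ψ : QBF) (hclosed : qfree ψ = ∅) :
    (∀ β : ℕ → Bool, qeval β ψ) ↔ ∃ (g : ℕ → ℕ) (n : ℕ), sat g n (f ψ) := by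
  simp only [sat_f_iff]
  constructor
  · intro htrue
    refine ⟨fun _ => 2, 0, 1, Nat.one_pos, 2, by norm_num, ?_⟩
    exact sat_h_of_qeval_decodeAssignment _ (by simp) (fun k => by simp) (htrue _)
  · rintro ⟨g, n, m, hnm, p, -, hχ⟩ β
    exact (qeval_congr ψ (by simp [hclosed])).2
      (qeval_decodeAssignment_of_sat_h (by simpa using hnm) hχ)
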